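/- Let H = (V,E) be a finite simple graph and f_i : ℕ → ℤ convex functions. Let f* denote the minimum over subgraphs G ⊆ H of ∑_{i∈V} f_i(deg_G(i)), and define for each i and k ∈ {1,…,deg_H(i)} the cost c_i^k := f_i(k) - f_i(k-1). Then for every subgraph G ⊆ H and every choice of subsets K_i ⊆ {1,…,deg_H(i)} with |K_i| = deg_G(i), we have ∑_{i∈V} ∑_{k∈K_i} c_i^k ≥ f* - ∑_{i∈V} f_i(0). -/

import Mathlib

/-!
The cost `c k = f k - f (k - 1)` of a convex `f` is nondecreasing in `k ≥ 1`, so any `d` costs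
chosen from `{1, 2, …}` add up to at least the `d` smallest ones, which telescope to
`f d - f 0`. Taking `d = deg_G(i)` at each vertex and summing, the total is at least
`∑ i, f i (deg_G i) - ∑ i, f i 0`, and the first sum is at least `f*` by minimality.
-/

/-- Degree of vertex `i` in the subgraph with edge set `F`. -/
def subDeg {V : Type*} [DecidableEq V] (F : Finset (Sym2 V)) (i : V) : ℕ :=
  (F.filter fun e => i ∈ e).card

open Finset

theorem Finset.sum_range_card_le_sum {M : Type*} [AddCommMonoid M] [PartialOrder M]
    [IsOrderedAddMonoid M] {c : ℕ → M} (hc : Monotone c) (S : Finset ℕ) :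
    ∑ k ∈ range #S, c k ≤ ∑ k ∈ S, c k := by
  induction S using Finset.induction_on_max with
  | empty => simp
  | insert a s hlt ih =>
    have ha : a ∉ s := fun h => (hlt a h).false
    have hcard : #s ≤ a := by simpa using card_le_card fun x hx => mem_range.2 (hlt x hx)
    rw [card_insert_of_notMem ha, sum_range_succ, sum_insert ha, add_comm (c a)]
    exact add_le_add ih (hc hcard)

theorem monotone_sub_of_two_mul_le {f : ℕ → ℤ}
    (hf : ∀ k : ℕ, 0 < k → 2 * f k ≤ f (k - 1) + f (k + 1)) :
    Monotone fun k => f (k + 1) - f k :=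
  monotone_nat_of_le_succ fun k => by
    have := hf (k + 1) k.succ_pos
    simp only [Nat.add_sub_cancel] at this
    linarith

theorem sub_zero_le_sum_sub_pred {M : Type*} [AddCommGroup M] [PartialOrder M]
    [IsOrderedAddMonoid M] {f : ℕ → M} (hf : Monotone fun k => f (k + 1) - f k)
    {S : Finset ℕ} (hS : 0 ∉ S) :
    f #S - f 0 ≤ ∑ k ∈ S, (f k - f (k - 1)) := by
  obtain ⟨T, rfl⟩ : ∃ T : Finset ℕ, T.map (addRightEmbedding 1) = S := by
    refine ⟨S.image (· - 1), ?_⟩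
    ext (_ | k)
    · simpa using hS
    · simp only [mem_map, mem_image, addRightEmbedding_apply, Nat.add_right_cancel_iff]
      grind
  simp only [card_map, sum_map, addRightEmbedding_apply, add_tsub_cancel_right]
  rw [← sum_range_sub]
  exact sum_range_card_le_sum hf T

theorem matching_reduction_lower_bound {V : Type*} [Fintype V] [DecidableEq V]
    (H : SimpleGraph V) [DecidableRel H.Adj]
    (f : V → ℕ → ℤ)
    (hconv : ∀ i, ∀ k : ℕ, 0 < k → 2 * f i k ≤ f i (k - 1) + f i (k + 1))
    (fstar : ℤ)
    (hstar : IsLeast {x : ℤ | ∃ F ⊆ H.edgeFinset, x = ∑ i, f i (subDeg F i)} fstar)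
    (F : Finset (Sym2 V)) (hF : F ⊆ H.edgeFinset)
    (K : V → Finset ℕ)
    (hK : ∀ i, K i ⊆ Finset.Icc 1 (H.degree i))
    (hKcard : ∀ i, (K i).card = subDeg F i) :
    ∑ i, ∑ k ∈ K i, (f i k - f i (k - 1)) ≥ fstar - ∑ i, f i 0 := by
  have hmin : fstar ≤ ∑ i, f i (subDeg F i) := hstar.2 ⟨F, hF, rfl⟩
  have hvertex (i : V) : f i (subDeg F i) - f i 0 ≤ ∑ k ∈ K i, (f i k - f i (k - 1)) := by
    rw [← hKcard i]
    exact sub_zero_le_sum_sub_pred (monotone_sub_of_two_mul_le (hconv i))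
      fun h0 => by simpa using hK i h0
  calc fstar - ∑ i, f i 0 ≤ ∑ i, (f i (subDeg F i) - f i 0) := by
        rw [sum_sub_distrib]; linarith
    _ ≤ ∑ i, ∑ k ∈ K i, (f i k - f i (k - 1)) := sum_le_sum fun i _ => hvertex i
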